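/- arXiv:2308.01037 — 4 statements merged into one kernel-verified Lean document; each statement's English description precedes it below -/
import Mathlib

section
/- Let {X_k} be a Markov chain on states {1,…,n} with initial distribution P(X_0 = i) = p_i and transition probabilities t_{ij} = |a_{ij}|/Σ_k|a_{ik}|, and let W^{(k)} be the multiplicative weight defined by W^{(0)} = 1/p_{X_0} and W^{(k)} = W^{(k-1)} · a_{X_{k-1} X_k}/t_{X_{k-1} X_k}. Then for each k ≥ 0, the expected value of the random rank-one matrix Y^{(k)} = C_{X_0} W^{(k)} R_{X_k} equals A^{k+2}, where C_j and R_j are the j-th column and row of A. -/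
open Matrix

lemma path_sum {n : ℕ} (A : Matrix (Fin n) (Fin n) ℝ) (m : ℕ) (i i' : Fin n) :
    ∑ ℓ : Fin (m + 1) → Fin n,
      (∏ j : Fin m, A (ℓ j.castSucc) (ℓ j.succ)) * (A i (ℓ 0) * A (ℓ (Fin.last m)) i')
      = (A ^ (m + 2)) i i' := by
  induction m generalizing i' with
  | zero =>
    rw [← ((Equiv.funUnique (Fin 1) (Fin n)).symm).sum_comp]
    simp [pow_succ, Matrix.mul_apply, Matrix.one_apply]
  | succ m ih =>
    rw [show m + 1 + 2 = (m + 2) + 1 from rfl, pow_succ, Matrix.mul_apply]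
    simp only [← ih]
    rw [← (Fin.snocEquiv (fun _ => Fin n)).sum_comp, Fintype.sum_prod_type]
    refine Finset.sum_congr rfl fun x _ => ?_
    rw [Finset.sum_mul]
    refine Finset.sum_congr rfl fun g _ => ?_
    simp only [Fin.snocEquiv_apply, Fin.prod_univ_castSucc, Fin.snoc_last, Fin.snoc_castSucc,
      Fin.succ_castSucc, Fin.succ_last]
    have h0 : (Fin.snoc g x : Fin (m+2) → Fin n) 0 = g 0 := by
      rw [show (0 : Fin (m+2)) = Fin.castSucc 0 from rfl, Fin.snoc_castSucc]
    rw [h0]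
    ring

/-- For the Markov chain with initial distribution `p_j = ‖C_j‖₂ / Σ_k ‖C_k‖₂` and
transition probabilities `t_{ij} = |a_{ij}| / Σ_k |a_{ik}|`, and multiplicative
weights `W⁽⁰⁾ = 1 / p_{X₀}`, `W⁽ᵏ⁾ = W⁽ᵏ⁻¹⁾ a_{X_{k-1} X_k} / t_{X_{k-1} X_k}`,
the expected value of the random rank-one matrix `Y⁽ᵏ⁾ = C_{X₀} W⁽ᵏ⁾ R_{X_k}`
equals `A^{k+2}`.  The expectation is written as the sum over all paths
`ℓ : Fin (k+1) → Fin n` of (probability of the path) × (realized matrix). -/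
theorem expectation_Yk_eq_pow {n : ℕ} (A : Matrix (Fin n) (Fin n) ℝ)
    (hrow : ∀ i, ∃ j, A i j ≠ 0) (hcol : ∀ j, ∃ i, A i j ≠ 0)
    (p : Fin n → ℝ) (t : Matrix (Fin n) (Fin n) ℝ)
    (hp : ∀ j, p j = Real.sqrt (∑ i, (A i j) ^ 2) / ∑ k, Real.sqrt (∑ i, (A i k) ^ 2))
    (ht : ∀ i j, t i j = |A i j| / ∑ k, |A i k|)
    (k : ℕ) :
    ∑ ℓ : Fin (k + 1) → Fin n,
      ((p (ℓ 0) * ∏ j : Fin k, t (ℓ j.castSucc) (ℓ j.succ)) *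
        ((p (ℓ 0))⁻¹ *
          ∏ j : Fin k, A (ℓ j.castSucc) (ℓ j.succ) / t (ℓ j.castSucc) (ℓ j.succ))) •
        Matrix.vecMulVec (fun i => A i (ℓ 0)) (A (ℓ (Fin.last k)))
      = A ^ (k + 2) := by
  -- column norms are positive, so `p j > 0`
  have hcolpos : ∀ j, 0 < Real.sqrt (∑ i, (A i j) ^ 2) := by
    intro j
    obtain ⟨i, hi⟩ := hcol j
    exact Real.sqrt_pos.mpr (Finset.sum_pos' (fun i _ => sq_nonneg _)
      ⟨i, Finset.mem_univ i, by positivity⟩)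
  have hppos : ∀ j, 0 < p j := by
    intro j
    rw [hp j]
    exact div_pos (hcolpos j) (Finset.sum_pos (fun j _ => hcolpos j) ⟨j, Finset.mem_univ j⟩)
  -- row abs sums are positive
  have hrowpos : ∀ i, 0 < ∑ k, |A i k| := by
    intro i
    obtain ⟨j, hj⟩ := hrow i
    exact Finset.sum_pos' (fun j _ => abs_nonneg _) ⟨j, Finset.mem_univ j, abs_pos.mpr hj⟩
  -- per-edge identity
  have hedge : ∀ i j, t i j * (A i j / t i j) = A i j := by
    intro i j
    by_cases h : A i j = 0
    · simp [h, ht]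
    · have htne : t i j ≠ 0 := by
        rw [ht]
        exact div_ne_zero (abs_ne_zero.mpr h) (ne_of_gt (hrowpos i))
      rw [mul_comm, div_mul_cancel₀ _ htne]
  ext i i'
  rw [← path_sum A k i i']
  simp only [Matrix.sum_apply, Matrix.smul_apply, Matrix.vecMulVec_apply, smul_eq_mul]
  refine Finset.sum_congr rfl fun ℓ _ => ?_
  have hc : (p (ℓ 0) * ∏ j : Fin k, t (ℓ j.castSucc) (ℓ j.succ)) *
      ((p (ℓ 0))⁻¹ *
        ∏ j : Fin k, A (ℓ j.castSucc) (ℓ j.succ) / t (ℓ j.castSucc) (ℓ j.succ)) =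
      ∏ j : Fin k, A (ℓ j.castSucc) (ℓ j.succ) := by
    rw [mul_mul_mul_comm, mul_inv_cancel₀ (ne_of_gt (hppos (ℓ 0))), one_mul,
      ← Finset.prod_mul_distrib]
    exact Finset.prod_congr rfl fun j _ => hedge _ _
  rw [hc]
end

section
/- With the Markov chain and weights of the previous setup, the expectation of the random matrix Z = Σ_{k=0}^∞ ζ_{k+2} C_{X_0} W^{(k)} R_{X_k} equals U = Σ_{k=2}^∞ ζ_k A^k, assuming the series converges absolutely. -/
lemma path_sum_pow {n : ℕ} (A : Matrix (Fin n) (Fin n) ℝ) :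
    ∀ (k : ℕ) (i j : Fin n),
      ∑ ℓ : Fin (k + 1) → Fin n,
        (∏ m : Fin k, A (ℓ m.castSucc) (ℓ m.succ)) * (A i (ℓ 0) * A (ℓ (Fin.last k)) j)
      = (A ^ (k + 2)) i j := by
  intro k
  induction k with
  | zero =>
    intro i j
    rw [Fintype.sum_equiv (Equiv.funUnique (Fin 1) (Fin n))
      (fun ℓ : Fin 1 → Fin n =>
        (∏ m : Fin 0, A (ℓ m.castSucc) (ℓ m.succ)) * (A i (ℓ 0) * A (ℓ (Fin.last 0)) j))
      (fun a : Fin n => A i a * A a j) (fun ℓ => by simp [Fin.last])]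
    rw [pow_two, Matrix.mul_apply]
  | succ k ih =>
    intro i j
    rw [← Fintype.sum_equiv (Fin.consEquiv (fun _ : Fin (k+2) => Fin n))
      (fun x : Fin n × (Fin (k+1) → Fin n) =>
        A i x.1 * ((∏ m : Fin k, A (x.2 m.castSucc) (x.2 m.succ)) *
          (A x.1 (x.2 0) * A (x.2 (Fin.last k)) j)))
      (fun ℓ : Fin (k+2) → Fin n =>
        (∏ m : Fin (k+1), A (ℓ m.castSucc) (ℓ m.succ)) * (A i (ℓ 0) * A (ℓ (Fin.last (k+1))) j))
      ?_]
    · rw [Fintype.sum_prod_type]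
      have key : ∀ a : Fin n, ∑ g : Fin (k+1) → Fin n,
          A i a * ((∏ m : Fin k, A (g m.castSucc) (g m.succ)) *
            (A a (g 0) * A (g (Fin.last k)) j)) = A i a * (A ^ (k+2)) a j := by
        intro a
        rw [← Finset.mul_sum, ih a j]
      simp_rw [key]
      have hPow : (A ^ (k+1+2) : Matrix (Fin n) (Fin n) ℝ) = A * A ^ (k+2) := by
        rw [show k+1+2 = (k+2)+1 by ring, pow_succ']
      rw [hPow, Matrix.mul_apply]
    · rintro ⟨a, g⟩
      simp only [Fin.consEquiv_apply]
      rw [Fin.prod_univ_succ]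
      have h0 : (Fin.cons a g : Fin (k+2) → Fin n) 0 = a := rfl
      have h1 : (Fin.cons a g : Fin (k+2) → Fin n) ((0 : Fin (k+1)).succ) = g 0 := by
        rw [Fin.cons_succ]
      have hlast : (Fin.cons a g : Fin (k+2) → Fin n) (Fin.last (k+1)) = g (Fin.last k) := by
        rw [← Fin.succ_last, Fin.cons_succ]
      have hcs : ∀ m : Fin k,
          (Fin.cons a g : Fin (k+2) → Fin n) (m.succ.castSucc) = g m.castSucc := by
        intro m; rw [← Fin.succ_castSucc, Fin.cons_succ]
      have hss : ∀ m : Fin k,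
          (Fin.cons a g : Fin (k+2) → Fin n) (m.succ.succ) = g m.succ := by
        intro m; rw [Fin.cons_succ]
      simp only [Fin.castSucc_zero, h0, h1, hlast, hcs, hss]
      ring

/-- With the Markov chain (initial distribution `p`, transitions `t`) and the
multiplicative weights as before, the expectation of the random matrix
`Z = Σ_{k=0}^∞ ζ_{k+2} C_{X₀} W⁽ᵏ⁾ R_{X_k}` equals `U = Σ_{k=2}^∞ ζ_k A^k`,
assuming the series converges absolutely.  The expectation of each term is
written as the sum over all paths `ℓ : Fin (k+1) → Fin n` of
(probability of the path) × (realized matrix). -/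
theorem expectation_Z_eq_U {n : ℕ} (A : Matrix (Fin n) (Fin n) ℝ)
    (hrow : ∀ i, ∃ j, A i j ≠ 0) (hcol : ∀ j, ∃ i, A i j ≠ 0)
    (p : Fin n → ℝ) (t : Matrix (Fin n) (Fin n) ℝ)
    (hp : ∀ j, p j = Real.sqrt (∑ i, (A i j) ^ 2) / ∑ k, Real.sqrt (∑ i, (A i k) ^ 2))
    (ht : ∀ i j, t i j = |A i j| / ∑ k, |A i k|)
    (ζ : ℕ → ℝ)
    (hsum : Summable fun k : ℕ => ζ (k + 2) • A ^ (k + 2)) :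
    ∑' k : ℕ,
      ∑ ℓ : Fin (k + 1) → Fin n,
        ((p (ℓ 0) * ∏ j : Fin k, t (ℓ j.castSucc) (ℓ j.succ)) *
          (ζ (k + 2) *
            ((p (ℓ 0))⁻¹ *
              ∏ j : Fin k, A (ℓ j.castSucc) (ℓ j.succ) / t (ℓ j.castSucc) (ℓ j.succ)))) •
          Matrix.vecMulVec (fun i => A i (ℓ 0)) (A (ℓ (Fin.last k)))
      = ∑' k : ℕ, ζ (k + 2) • A ^ (k + 2) := by
  -- positivity of row sums
  have hden : ∀ i, 0 < ∑ m, |A i m| := by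
    intro i
    obtain ⟨j, hj⟩ := hrow i
    exact Finset.sum_pos' (fun m _ => abs_nonneg _)
      ⟨j, Finset.mem_univ j, abs_pos.mpr hj⟩
  -- t i j * (A i j / t i j) = A i j
  have htA : ∀ i j, t i j * (A i j / t i j) = A i j := by
    intro i j
    by_cases h : A i j = 0
    · simp [h]
    · have htne : t i j ≠ 0 := by
        rw [ht i j]
        exact div_ne_zero (abs_ne_zero.mpr h) (ne_of_gt (hden i))
      field_simp
  -- p j ≠ 0
  have hpne : ∀ j, p j ≠ 0 := by
    intro j
    rw [hp j]
    have hnum : 0 < Real.sqrt (∑ i, (A i j) ^ 2) := by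
      obtain ⟨i, hi⟩ := hcol j
      exact Real.sqrt_pos.mpr (Finset.sum_pos'
        (fun m _ => sq_nonneg _) ⟨i, Finset.mem_univ i, by positivity⟩)
    have hden2 : 0 < ∑ k, Real.sqrt (∑ i, (A i k) ^ 2) := by
      obtain ⟨i, hi⟩ := hcol j
      exact Finset.sum_pos' (fun m _ => Real.sqrt_nonneg _)
        ⟨j, Finset.mem_univ j, Real.sqrt_pos.mpr (Finset.sum_pos'
          (fun m _ => sq_nonneg _) ⟨i, Finset.mem_univ i, by positivity⟩)⟩
    exact ne_of_gt (div_pos hnum hden2)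
  refine tsum_congr fun k => ?_
  have hterm : ∀ ℓ : Fin (k + 1) → Fin n,
      ((p (ℓ 0) * ∏ j : Fin k, t (ℓ j.castSucc) (ℓ j.succ)) *
        (ζ (k + 2) *
          ((p (ℓ 0))⁻¹ *
            ∏ j : Fin k, A (ℓ j.castSucc) (ℓ j.succ) / t (ℓ j.castSucc) (ℓ j.succ))))
      = ζ (k + 2) * ∏ j : Fin k, A (ℓ j.castSucc) (ℓ j.succ) := by
    intro ℓ
    have h1 : (∏ j : Fin k, t (ℓ j.castSucc) (ℓ j.succ)) *
        (∏ j : Fin k, A (ℓ j.castSucc) (ℓ j.succ) / t (ℓ j.castSucc) (ℓ j.succ))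
        = ∏ j : Fin k, A (ℓ j.castSucc) (ℓ j.succ) := by
      rw [← Finset.prod_mul_distrib]
      exact Finset.prod_congr rfl fun j _ => htA _ _
    have h2 : p (ℓ 0) * (p (ℓ 0))⁻¹ = 1 := mul_inv_cancel₀ (hpne _)
    calc (p (ℓ 0) * ∏ j : Fin k, t (ℓ j.castSucc) (ℓ j.succ)) *
        (ζ (k + 2) *
          ((p (ℓ 0))⁻¹ *
            ∏ j : Fin k, A (ℓ j.castSucc) (ℓ j.succ) / t (ℓ j.castSucc) (ℓ j.succ)))
        = (p (ℓ 0) * (p (ℓ 0))⁻¹) * (ζ (k + 2) *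
            ((∏ j : Fin k, t (ℓ j.castSucc) (ℓ j.succ)) *
              ∏ j : Fin k, A (ℓ j.castSucc) (ℓ j.succ) / t (ℓ j.castSucc) (ℓ j.succ))) := by
          ring
      _ = ζ (k + 2) * ∏ j : Fin k, A (ℓ j.castSucc) (ℓ j.succ) := by rw [h2, h1]; ring
  simp_rw [hterm]
  ext i j
  rw [Matrix.sum_apply]
  simp only [Matrix.smul_apply, Matrix.vecMulVec_apply, smul_eq_mul]
  have := path_sum_pow A k i j
  calc ∑ ℓ : Fin (k + 1) → Fin n,
      (ζ (k + 2) * ∏ m : Fin k, A (ℓ m.castSucc) (ℓ m.succ)) *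
        (A i (ℓ 0) * A (ℓ (Fin.last k)) j)
      = ζ (k + 2) * ∑ ℓ : Fin (k + 1) → Fin n,
          (∏ m : Fin k, A (ℓ m.castSucc) (ℓ m.succ)) * (A i (ℓ 0) * A (ℓ (Fin.last k)) j) := by
        rw [Finset.mul_sum]; exact Finset.sum_congr rfl fun ℓ _ => by ring
    _ = ζ (k + 2) * (A ^ (k + 2)) i j := by rw [this]
end

section
/- With the Markov chain setup and weights as above, the second moment of each component ξ_i^{(k)} of the random vector ζ_{k+2} W^{(k)} vec(C_{X_0} R_{X_k}) satisfies E[(ξ_i^{(k)})²] ≤ (ζ_{k+2}² / p_min²) · α^k · β, where α = max_i (Σ_j |a_{ij}|)², β = max over pairs (j₀, j_k) of the squared i-th entry of vec(C_{j₀} R_{j_k}), and p_min = min over starting states of p_{ℓ₀}. -/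
open Finset

lemma path_sum_s9 {n : ℕ} [NeZero n] (t : Matrix (Fin n) (Fin n) ℝ)
    (hstoch : ∀ i', ∑ j, t i' j = 1) (k : ℕ) (ℓ₀ : Fin n) :
    ∑ c ∈ Finset.univ.filter (fun c : Fin (k + 1) → Fin n => c 0 = ℓ₀),
      (∏ j : Fin k, t (c j.castSucc) (c j.succ)) = 1 := by
  induction k with
  | zero =>
    have : Finset.univ.filter (fun c : Fin 1 → Fin n => c 0 = ℓ₀) = {fun _ => ℓ₀} := by
      ext c
      simp only [Finset.mem_filter, Finset.mem_univ, true_and, Finset.mem_singleton]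
      constructor
      · intro h; funext j; rw [Fin.eq_zero j]; exact h
      · intro h; rw [h]
    rw [this]
    simp
  | succ k ih =>
    rw [Finset.sum_filter] at *
    rw [← Fintype.sum_equiv (Fin.snocEquiv (fun _ => Fin n))
      (fun q : Fin n × (Fin (k+1) → Fin n) => if q.2 0 = ℓ₀ then
        (∏ j : Fin k, t (q.2 j.castSucc) (q.2 j.succ)) * t (q.2 (Fin.last k)) q.1 else 0)
      (fun c => if c 0 = ℓ₀ then ∏ j : Fin (k+1), t (c j.castSucc) (c j.succ) else 0) ?_]
    · rw [Fintype.sum_prod_type_right]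
      rw [← ih]
      apply Finset.sum_congr rfl
      intro c _
      by_cases h : c 0 = ℓ₀
      · simp only [h, if_true]
        rw [← Finset.mul_sum, hstoch, mul_one]
      · simp [h]
    · intro q
      obtain ⟨x, c⟩ := q
      have h0 : (Fin.snocEquiv (fun _ => Fin n) (x, c)) 0 = c 0 := by
        show (Fin.snoc c x : Fin (k+2) → Fin n) 0 = c 0
        rw [show (0 : Fin (k+2)) = Fin.castSucc 0 by rfl, Fin.snoc_castSucc]
      simp only
      rw [h0]
      by_cases h : c 0 = ℓ₀
      case neg => simp [h]
      simp only [h, if_true]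
      rw [Fin.prod_univ_castSucc]
      congr 1
      · apply Finset.prod_congr rfl
        intro j _
        symm
        show t ((Fin.snoc c x : Fin (k+2) → Fin n) _) ((Fin.snoc c x : Fin (k+2) → Fin n) _) = _
        rw [Fin.snoc_castSucc, Fin.succ_castSucc, Fin.snoc_castSucc]
      · symm
        show t ((Fin.snoc c x : Fin (k+2) → Fin n) _) ((Fin.snoc c x : Fin (k+2) → Fin n) _) = _
        rw [Fin.snoc_castSucc, Fin.succ_last, Fin.snoc_last]

/-- Second-moment bound for the components of the random vector
`ξ⁽ᵏ⁾ = ζ_{k+2} W⁽ᵏ⁾ vec(C_{X₀} R_{X_k})`: conditioned on the start state `ℓ₀`,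
`E[(ξ_i⁽ᵏ⁾)²] ≤ (ζ_{k+2}² / p_min²) α^k β`, where `α = max_i (Σ_j |a_{ij}|)²`,
`β` is the maximum over pairs `(j₀, j_k)` of the squared `i`-th entry of
`vec(C_{j₀} R_{j_k})`, and `p_min = min_j p_j`.  The expectation is written as
the sum over all paths starting at `ℓ₀`. -/
theorem second_moment_bound {n : ℕ} [NeZero n] (A : Matrix (Fin n) (Fin n) ℝ)
    (hrow : ∀ i', ∃ j, A i' j ≠ 0)
    (p : Fin n → ℝ) (hp : ∀ j, 0 < p j)
    (t : Matrix (Fin n) (Fin n) ℝ)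
    (ht : ∀ i' j, t i' j = |A i' j| / ∑ k, |A i' k|)
    (ζ : ℕ → ℝ) (k : ℕ) (ℓ₀ : Fin n) (i : Fin n × Fin n)
    (α β pmin : ℝ)
    (hα : α = Finset.univ.sup' Finset.univ_nonempty (fun r => (∑ j, |A r j|) ^ 2))
    (hβ : β = Finset.univ.sup' Finset.univ_nonempty
        (fun jp : Fin n × Fin n => (A i.1 jp.1 * A jp.2 i.2) ^ 2))
    (hpmin : pmin = Finset.univ.inf' Finset.univ_nonempty p) :
    ∑ c ∈ Finset.univ.filter (fun c : Fin (k + 1) → Fin n => c 0 = ℓ₀),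
      (∏ j : Fin k, t (c j.castSucc) (c j.succ)) *
        (ζ (k + 2) *
            ((p ℓ₀)⁻¹ *
              ∏ j : Fin k, A (c j.castSucc) (c j.succ) / t (c j.castSucc) (c j.succ)) *
          (A i.1 (c 0) * A (c (Fin.last k)) i.2)) ^ 2
      ≤ ζ (k + 2) ^ 2 / pmin ^ 2 * α ^ k * β := by
  have hSpos : ∀ r, 0 < ∑ k', |A r k'| := fun r => by
    obtain ⟨j, hj⟩ := hrow r
    exact Finset.sum_pos' (fun _ _ => abs_nonneg _) ⟨j, Finset.mem_univ j, abs_pos.2 hj⟩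
  have hstoch : ∀ i', ∑ j, t i' j = 1 := fun i' => by
    simp only [ht]
    rw [← Finset.sum_div, div_self (hSpos i').ne']
  have htnn : ∀ r s, 0 ≤ t r s := fun r s => by
    rw [ht]; positivity
  have hαge : ∀ r, (∑ j, |A r j|) ^ 2 ≤ α := fun r =>
    hα ▸ Finset.le_sup' (fun r => (∑ j, |A r j|) ^ 2) (Finset.mem_univ r)
  have hα0 : 0 ≤ α := le_trans (sq_nonneg _) (hαge (0 : Fin n))
  have hβge : ∀ jp : Fin n × Fin n, (A i.1 jp.1 * A jp.2 i.2) ^ 2 ≤ β := fun jp =>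
    hβ ▸ Finset.le_sup' (fun jp : Fin n × Fin n => (A i.1 jp.1 * A jp.2 i.2) ^ 2)
      (Finset.mem_univ jp)
  have hβ0 : 0 ≤ β := le_trans (sq_nonneg _) (hβge ((0 : Fin n), (0 : Fin n)))
  have hpminle : ∀ j, pmin ≤ p j := fun j =>
    hpmin ▸ Finset.inf'_le p (Finset.mem_univ j)
  have hpminpos : 0 < pmin := by
    rw [hpmin, Finset.lt_inf'_iff]
    exact fun j _ => hp j
  have hfac : ∀ r s, t r s * (A r s / t r s) ^ 2 ≤ α * t r s := by
    intro r s
    by_cases hA : A r s = 0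
    · simp [ht, hA]
    · have hsq : (A r s / t r s) ^ 2 = (∑ k', |A r k'|) ^ 2 := by
        rw [ht, div_div_eq_mul_div, div_pow, mul_pow, sq_abs, mul_comm,
          mul_div_assoc, div_self (pow_ne_zero 2 hA), mul_one]
      rw [hsq, mul_comm]
      exact mul_le_mul_of_nonneg_right (hαge r) (htnn r s)
  set C : ℝ := ζ (k + 2) ^ 2 * (pmin⁻¹) ^ 2 * β * α ^ k with hC
  have key : ∀ c ∈ Finset.univ.filter (fun c : Fin (k + 1) → Fin n => c 0 = ℓ₀),
      (∏ j : Fin k, t (c j.castSucc) (c j.succ)) *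
        (ζ (k + 2) *
            ((p ℓ₀)⁻¹ *
              ∏ j : Fin k, A (c j.castSucc) (c j.succ) / t (c j.castSucc) (c j.succ)) *
          (A i.1 (c 0) * A (c (Fin.last k)) i.2)) ^ 2
      ≤ C * ∏ j : Fin k, t (c j.castSucc) (c j.succ) := by
    intro c _
    have hprodnn : (0:ℝ) ≤ ∏ j : Fin k, t (c j.castSucc) (c j.succ) :=
      Finset.prod_nonneg (fun j _ => htnn _ _)
    have hZ : ∏ j : Fin k, (t (c j.castSucc) (c j.succ) *
        (A (c j.castSucc) (c j.succ) / t (c j.castSucc) (c j.succ)) ^ 2)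
        ≤ α ^ k * ∏ j : Fin k, t (c j.castSucc) (c j.succ) := by
      calc ∏ j : Fin k, (t (c j.castSucc) (c j.succ) *
            (A (c j.castSucc) (c j.succ) / t (c j.castSucc) (c j.succ)) ^ 2)
          ≤ ∏ j : Fin k, (α * t (c j.castSucc) (c j.succ)) :=
            Finset.prod_le_prod (fun j _ => mul_nonneg (htnn _ _) (sq_nonneg _)) (fun j _ => hfac _ _)
        _ = α ^ k * ∏ j : Fin k, t (c j.castSucc) (c j.succ) := by
            rw [Finset.prod_mul_distrib, Finset.prod_const, Finset.card_univ,
              Fintype.card_fin]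
    have hZ0 : (0:ℝ) ≤ ∏ j : Fin k, (t (c j.castSucc) (c j.succ) *
        (A (c j.castSucc) (c j.succ) / t (c j.castSucc) (c j.succ)) ^ 2) :=
      Finset.prod_nonneg (fun j _ => mul_nonneg (htnn _ _) (sq_nonneg _))
    have hexp : (∏ j : Fin k, t (c j.castSucc) (c j.succ)) *
        (ζ (k + 2) *
            ((p ℓ₀)⁻¹ *
              ∏ j : Fin k, A (c j.castSucc) (c j.succ) / t (c j.castSucc) (c j.succ)) *
          (A i.1 (c 0) * A (c (Fin.last k)) i.2)) ^ 2
        = ζ (k + 2) ^ 2 * ((p ℓ₀)⁻¹) ^ 2 * (A i.1 (c 0) * A (c (Fin.last k)) i.2) ^ 2 *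
          ∏ j : Fin k, (t (c j.castSucc) (c j.succ) *
            (A (c j.castSucc) (c j.succ) / t (c j.castSucc) (c j.succ)) ^ 2) := by
      rw [Finset.prod_mul_distrib, Finset.prod_pow]
      ring
    rw [hexp, hC]
    have hQ : (A i.1 (c 0) * A (c (Fin.last k)) i.2) ^ 2 ≤ β := hβge (c 0, c (Fin.last k))
    have hpinv : ((p ℓ₀)⁻¹) ^ 2 ≤ (pmin⁻¹) ^ 2 := by
      exact pow_le_pow_left₀ (inv_nonneg.2 (hp ℓ₀).le)
        (inv_anti₀ hpminpos (hpminle ℓ₀)) 2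
    calc ζ (k + 2) ^ 2 * ((p ℓ₀)⁻¹) ^ 2 * (A i.1 (c 0) * A (c (Fin.last k)) i.2) ^ 2 *
          ∏ j : Fin k, (t (c j.castSucc) (c j.succ) *
            (A (c j.castSucc) (c j.succ) / t (c j.castSucc) (c j.succ)) ^ 2)
        ≤ ζ (k + 2) ^ 2 * (pmin⁻¹) ^ 2 * β *
          (α ^ k * ∏ j : Fin k, t (c j.castSucc) (c j.succ)) := by
          exact mul_le_mul
            (mul_le_mul (mul_le_mul_of_nonneg_left hpinv (sq_nonneg _)) hQ (sq_nonneg _)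
              (mul_nonneg (sq_nonneg _) (sq_nonneg _)))
            hZ hZ0 (mul_nonneg (mul_nonneg (sq_nonneg _) (sq_nonneg _)) hβ0)
      _ = ζ (k + 2) ^ 2 * (pmin⁻¹) ^ 2 * β * α ^ k *
          ∏ j : Fin k, t (c j.castSucc) (c j.succ) := by ring
  calc ∑ c ∈ Finset.univ.filter (fun c : Fin (k + 1) → Fin n => c 0 = ℓ₀),
      (∏ j : Fin k, t (c j.castSucc) (c j.succ)) *
        (ζ (k + 2) *
            ((p ℓ₀)⁻¹ *
              ∏ j : Fin k, A (c j.castSucc) (c j.succ) / t (c j.castSucc) (c j.succ)) *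
          (A i.1 (c 0) * A (c (Fin.last k)) i.2)) ^ 2
      ≤ ∑ c ∈ Finset.univ.filter (fun c : Fin (k + 1) → Fin n => c 0 = ℓ₀),
        C * ∏ j : Fin k, t (c j.castSucc) (c j.succ) := Finset.sum_le_sum key
    _ = C := by rw [← Finset.mul_sum, path_sum_s9 t hstoch k ℓ₀, mul_one]
    _ = ζ (k + 2) ^ 2 / pmin ^ 2 * α ^ k * β := by rw [hC]; ring
end

section
/- For a symmetric matrix A whose ∞-norm row sums satisfy Σ_j |a_{ij}| ≤ α^{1/2} for all i, the variance of each component v_i(s) of the estimator V(s) = Σ_{k=0}^m ξ^{(k)}(s) is bounded by (β / (α² p_{ℓ₀}²)) · Σ_{j=0}^∞ |ζ_j| α^j, provided this series converges and |ζ_k| ≤ 1 for all k. -/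
/-!
Along a walk `c`, the squared importance weight `∏ a/t` times the path probability `∏ t`
factorises into the product of the entries `t_{rs} (a_{rs}/t_{rs})² = |a_{rs}| Σ_k |a_{rk}|`.
This nonnegative matrix has row sums `(Σ_k |a_{rk}|)² ≤ α`, so summing over all `k`-step walks
gives at most `α^k`. The endpoint factor contributes at most `β`, `ζ_{k+2}² ≤ |ζ_{k+2}|`, and
`α^k = α^{k+2} / α²`, so the `k`-th second moment is bounded by the `(k+2)`-th term of
the series.
-/

open Matrix Finset

section Walks

variable {ι : Type*}

def pathProd (M : Matrix ι ι ℝ) {k : ℕ} (c : Fin (k + 1) → ι) : ℝ :=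
  ∏ j : Fin k, M (c j.castSucc) (c j.succ)

theorem pathProd_cons (M : Matrix ι ι ℝ) {k : ℕ} (x : ι) (c : Fin (k + 1) → ι) :
    pathProd M (Fin.cons x c : Fin (k + 2) → ι) = M x (c 0) * pathProd M c := by
  simp [pathProd, Fin.prod_univ_succ]

theorem pathProd_mul_sq (M W : Matrix ι ι ℝ) {k : ℕ} (c : Fin (k + 1) → ι) :
    pathProd M c * pathProd W c ^ 2 = pathProd (M ⊙ W ⊙ W) c := by
  simp only [pathProd, hadamard_apply, ← prod_mul_distrib, sq, mul_assoc]

variable [Fintype ι]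

theorem sum_pi_fin_succ {M : Type*} [AddCommMonoid M] {k : ℕ} (f : (Fin (k + 1) → ι) → M) :
    ∑ c, f c = ∑ x, ∑ c : Fin k → ι, f (Fin.cons x c) := by
  rw [← Fintype.sum_prod_type']
  exact (Fintype.sum_equiv (Fin.consEquiv fun _ => ι) _ _ fun _ => rfl).symm

theorem sum_filter_zero_eq_sum_cons [DecidableEq ι] {M : Type*} [AddCommMonoid M] {k : ℕ}
    (ℓ : ι) (f : (Fin (k + 1) → ι) → M) :
    ∑ c ∈ univ.filter (fun c : Fin (k + 1) → ι => c 0 = ℓ), f c =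
      ∑ c : Fin k → ι, f (Fin.cons ℓ c) := by
  rw [sum_filter, sum_pi_fin_succ, Fintype.sum_eq_single ℓ]
  · simp
  · intro x hx
    simp [hx]

theorem sum_pathProd_cons_le (M : Matrix ι ι ℝ) (hM : ∀ r s, 0 ≤ M r s) {α : ℝ}
    (hrow : ∀ r, ∑ s, M r s ≤ α) (k : ℕ) (ℓ : ι) :
    ∑ c : Fin k → ι, pathProd M (Fin.cons ℓ c) ≤ α ^ k := by
  induction k generalizing ℓ with
  | zero => simp [pathProd]
  | succ k ih =>
    have hα : 0 ≤ α := (sum_nonneg fun s _ => hM ℓ s).trans (hrow ℓ)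
    calc ∑ c : Fin (k + 1) → ι, pathProd M (Fin.cons ℓ c)
        = ∑ x, M ℓ x * ∑ c : Fin k → ι, pathProd M (Fin.cons x c) := by
          simp only [pathProd_cons, sum_pi_fin_succ, Fin.cons_zero, mul_sum]
      _ ≤ ∑ x, M ℓ x * α ^ k :=
          sum_le_sum fun x _ => mul_le_mul_of_nonneg_left (ih x) (hM ℓ x)
      _ ≤ α ^ (k + 1) := by
          rw [← sum_mul, pow_succ']
          exact mul_le_mul_of_nonneg_right (hrow ℓ) (pow_nonneg hα k)

theorem sum_pathProd_mul_sq_le (M W : Matrix ι ι ℝ) {α β : ℝ}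
    (hMW : ∀ r s, 0 ≤ M r s * W r s ^ 2) (hrow : ∀ r, ∑ s, M r s * W r s ^ 2 ≤ α)
    (f : ι → ℝ) (hf : ∀ j, f j ^ 2 ≤ β) (a : ℝ) (k : ℕ) (ℓ : ι) :
    ∑ c : Fin k → ι, pathProd M (Fin.cons ℓ c) *
        (a * pathProd W (Fin.cons ℓ c) *
          f ((Fin.cons ℓ c : Fin (k + 1) → ι) (Fin.last k))) ^ 2
      ≤ a ^ 2 * β * α ^ k := by
  have hM : ∀ r s, 0 ≤ (M ⊙ W ⊙ W) r s := fun r s => by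
    simpa [hadamard_apply, sq, mul_assoc] using hMW r s
  calc _ = ∑ c : Fin k → ι, a ^ 2 * f ((Fin.cons ℓ c : Fin (k + 1) → ι) (Fin.last k)) ^ 2 *
          pathProd (M ⊙ W ⊙ W) (Fin.cons ℓ c) := by
        refine sum_congr rfl fun c _ => ?_
        rw [← pathProd_mul_sq]
        ring
    _ ≤ ∑ c : Fin k → ι, a ^ 2 * β * pathProd (M ⊙ W ⊙ W) (Fin.cons ℓ c) := by
        gcongr with c
        · exact prod_nonneg fun j _ => hM _ _
        · exact hf _
    _ ≤ a ^ 2 * β * α ^ k := by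
        rw [← mul_sum]
        refine mul_le_mul_of_nonneg_left (sum_pathProd_cons_le _ hM ?_ k ℓ) ?_
        · simpa [hadamard_apply, sq, mul_assoc] using hrow
        · exact mul_nonneg (sq_nonneg a) ((sq_nonneg _).trans (hf ℓ))

end Walks

theorem sum_range_add_le_tsum {f : ℕ → ℝ} (hf : Summable f) (hf0 : ∀ n, 0 ≤ f n) (d N : ℕ) :
    ∑ k ∈ range N, f (k + d) ≤ ∑' k, f k :=
  (((summable_nat_add_iff d).2 hf).sum_le_tsum _ fun _ _ => hf0 _).trans
    (tsum_comp_le_tsum_of_inj hf hf0 (add_left_injective d))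

section Transition

variable {ι : Type*} [Fintype ι]

noncomputable def transitionMatrix (A : Matrix ι ι ℝ) : Matrix ι ι ℝ :=
  of fun r s => |A r s| / ∑ k, |A r k|

theorem transitionMatrix_nonneg (A : Matrix ι ι ℝ) (r s : ι) : 0 ≤ transitionMatrix A r s := by
  simp only [transitionMatrix, of_apply]
  positivity

noncomputable def transitionWeight (A : Matrix ι ι ℝ) : Matrix ι ι ℝ :=
  of fun r s => A r s / transitionMatrix A r s

-- No hypothesis on `A`: a zero row of `A` gives a zero row of `transitionMatrix A` (`x / 0 = 0`).
theorem transitionMatrix_mul_transitionWeight_sq (A : Matrix ι ι ℝ) (r s : ι) :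
    transitionMatrix A r s * transitionWeight A r s ^ 2 = |A r s| * ∑ k, |A r k| := by
  rcases eq_or_ne (A r s) 0 with h | h
  · simp [transitionMatrix, h]
  have hS : 0 < ∑ k, |A r k| :=
    (abs_pos.2 h).trans_le (single_le_sum (fun k _ => abs_nonneg (A r k)) (mem_univ s))
  simp only [transitionWeight, transitionMatrix, of_apply]
  field_simp
  rw [sq_abs]

theorem sum_transitionMatrix_mul_transitionWeight_sq (A : Matrix ι ι ℝ) (r : ι) :
    ∑ s, transitionMatrix A r s * transitionWeight A r s ^ 2 = (∑ s, |A r s|) ^ 2 := by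
  rw [sq (∑ s, |A r s|), sum_mul]
  exact sum_congr rfl fun s _ => transitionMatrix_mul_transitionWeight_sq A r s

theorem sum_walk_estimator_sq_le [DecidableEq ι] (A : Matrix ι ι ℝ) {α β : ℝ}
    (hα : ∀ r, (∑ s, |A r s|) ^ 2 ≤ α) (i₁ i₂ ℓ : ι) (hβ : ∀ j, (A i₁ ℓ * A j i₂) ^ 2 ≤ β)
    {z : ℝ} (hz : |z| ≤ 1) (q : ℝ) (k : ℕ) :
    ∑ c ∈ univ.filter (fun c : Fin (k + 1) → ι => c 0 = ℓ),
        pathProd (transitionMatrix A) c * (z * (q * pathProd (transitionWeight A) c) *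
          (A i₁ (c 0) * A (c (Fin.last k)) i₂)) ^ 2
      ≤ |z| * q ^ 2 * β * α ^ k := by
  have hz2 : z ^ 2 ≤ |z| := by
    rw [← sq_abs, sq]
    exact mul_le_of_le_one_left (abs_nonneg _) hz
  have hβ0 : 0 ≤ β := (sq_nonneg _).trans (hβ ℓ)
  rw [sum_filter_zero_eq_sum_cons]
  calc _ = _ := sum_congr rfl fun c _ => by simp only [Fin.cons_zero]; ring
    _ ≤ (z * q) ^ 2 * β * α ^ k :=
        sum_pathProd_mul_sq_le _ (transitionWeight A)
          (fun r s => mul_nonneg (transitionMatrix_nonneg A r s) (sq_nonneg _))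
          (fun r => (sum_transitionMatrix_mul_transitionWeight_sq A r).trans_le (hα r))
          (fun j => A i₁ ℓ * A j i₂) hβ _ k ℓ
    _ ≤ |z| * q ^ 2 * β * α ^ k := by
        have hα0 : 0 ≤ α := (sq_nonneg _).trans (hα ℓ)
        rw [mul_pow]
        gcongr

end Transition

theorem variance_bound_general {n : ℕ} [NeZero n] (A : Matrix (Fin n) (Fin n) ℝ)
    (hrow : ∀ i', ∃ j, A i' j ≠ 0)
    (t : Matrix (Fin n) (Fin n) ℝ)
    (ht : ∀ i' j, t i' j = |A i' j| / ∑ k, |A i' k|)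
    (p : Fin n → ℝ) (ℓ₀ : Fin n)
    (ζ : ℕ → ℝ) (hζ : ∀ k, |ζ k| ≤ 1)
    (i : Fin n × Fin n) (m : ℕ)
    (α β : ℝ)
    (hα : α = Finset.univ.sup' Finset.univ_nonempty (fun r => (∑ j, |A r j|) ^ 2))
    (hβ : β = Finset.univ.sup' Finset.univ_nonempty
        (fun j : Fin n => (A i.1 ℓ₀ * A j i.2) ^ 2))
    (hconv : Summable fun j : ℕ => |ζ j| * α ^ j) :
    ∑ k ∈ Finset.range (m + 1),
      ∑ c ∈ Finset.univ.filter (fun c : Fin (k + 1) → Fin n => c 0 = ℓ₀),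
        (∏ j : Fin k, t (c j.castSucc) (c j.succ)) *
          (ζ (k + 2) *
              ((p ℓ₀)⁻¹ *
                ∏ j : Fin k, A (c j.castSucc) (c j.succ) / t (c j.castSucc) (c j.succ)) *
            (A i.1 (c 0) * A (c (Fin.last k)) i.2)) ^ 2
      ≤ β / (α ^ 2 * p ℓ₀ ^ 2) * ∑' j : ℕ, |ζ j| * α ^ j := by
  obtain rfl : t = transitionMatrix A := Matrix.ext ht
  have hα_ge (r : Fin n) : (∑ j, |A r j|) ^ 2 ≤ α :=
    hα ▸ le_sup' (fun r => (∑ j, |A r j|) ^ 2) (mem_univ r)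
  have hβ_ge (j : Fin n) : (A i.1 ℓ₀ * A j i.2) ^ 2 ≤ β :=
    hβ ▸ le_sup' (fun j => (A i.1 ℓ₀ * A j i.2) ^ 2) (mem_univ j)
  have hα_pos : 0 < α := by
    obtain ⟨j, hj⟩ := hrow 0
    refine lt_of_lt_of_le (pow_pos ?_ 2) (hα_ge 0)
    exact (abs_pos.2 hj).trans_le (single_le_sum (fun k _ => abs_nonneg (A 0 k)) (mem_univ j))
  have hβ_nonneg : 0 ≤ β := (sq_nonneg _).trans (hβ_ge 0)
  have hterm (j : ℕ) : 0 ≤ |ζ j| * α ^ j := by positivity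
  calc _ ≤ ∑ k ∈ range (m + 1), |ζ (k + 2)| * (p ℓ₀)⁻¹ ^ 2 * β * α ^ k :=
        sum_le_sum fun k _ => sum_walk_estimator_sq_le A hα_ge i.1 i.2 ℓ₀ hβ_ge (hζ _) _ k
    _ = β / (α ^ 2 * p ℓ₀ ^ 2) * ∑ k ∈ range (m + 1), |ζ (k + 2)| * α ^ (k + 2) := by
        rw [mul_sum]
        refine sum_congr rfl fun k _ => ?_
        field_simp
        ring
    _ ≤ _ := mul_le_mul_of_nonneg_left (sum_range_add_le_tsum hconv hterm 2 (m + 1))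
          (by positivity)

/-- Variance bound: for a symmetric matrix `A` with every absolute row sum at most
`α^{1/2}`, assuming the components `ξ⁽ᵏ⁾` of a single walk are independent, the
variance of each component of `V(s) = Σ_{k=0}^m ξ⁽ᵏ⁾(s)` is bounded by the sum of
second moments, which satisfies
`Σ_{k=0}^m E[(ξ_i⁽ᵏ⁾)²] ≤ (β / (α² p_{ℓ₀}²)) · Σ_{j=0}^∞ |ζ_j| α^j`,
provided this series converges and `|ζ_k| ≤ 1` for all `k`.  Here the chain starts
at `ℓ₀` (probability `p_{ℓ₀} > 0`), `α = max_i (Σ_j |a_{ij}|)²`, and `β` is the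
maximum over final states `j` of the squared `i`-th component of `vec(C_{ℓ₀} R_j)`. -/
theorem variance_bound {n : ℕ} [NeZero n] (A : Matrix (Fin n) (Fin n) ℝ)
    (hsym : A.IsSymm)
    (hrow : ∀ i', ∃ j, A i' j ≠ 0)
    (t : Matrix (Fin n) (Fin n) ℝ)
    (ht : ∀ i' j, t i' j = |A i' j| / ∑ k, |A i' k|)
    (p : Fin n → ℝ) (ℓ₀ : Fin n) (hp : 0 < p ℓ₀)
    (ζ : ℕ → ℝ) (hζ : ∀ k, |ζ k| ≤ 1)
    (i : Fin n × Fin n) (m : ℕ)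
    (α β : ℝ)
    (hα : α = Finset.univ.sup' Finset.univ_nonempty (fun r => (∑ j, |A r j|) ^ 2))
    (hrowsum : ∀ i', ∑ j, |A i' j| ≤ Real.sqrt α)
    (hβ : β = Finset.univ.sup' Finset.univ_nonempty
        (fun j : Fin n => (A i.1 ℓ₀ * A j i.2) ^ 2))
    (hconv : Summable fun j : ℕ => |ζ j| * α ^ j) :
    ∑ k ∈ Finset.range (m + 1),
      ∑ c ∈ Finset.univ.filter (fun c : Fin (k + 1) → Fin n => c 0 = ℓ₀),
        (∏ j : Fin k, t (c j.castSucc) (c j.succ)) *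
          (ζ (k + 2) *
              ((p ℓ₀)⁻¹ *
                ∏ j : Fin k, A (c j.castSucc) (c j.succ) / t (c j.castSucc) (c j.succ)) *
            (A i.1 (c 0) * A (c (Fin.last k)) i.2)) ^ 2
      ≤ β / (α ^ 2 * p ℓ₀ ^ 2) * ∑' j : ℕ, |ζ j| * α ^ j :=
  variance_bound_general A hrow t ht p ℓ₀ ζ hζ i m α β hα hβ hconv
end
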